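/- arXiv:2502.08763 — 4 statements merged into one kernel-verified Lean document; each statement's English description precedes it below -/
import Mathlib

section
/- Let M be a Poisson(M₀) random variable (M₀ > 0) independent of the experiment data, and fix ℓ ≥ 1. Then the leave-ℓ-out cross-validation estimator, rescaled by ℓ!/M₀^ℓ and summed over all folds, is unbiased for the expected true reward of the rule applied to the full data: E[ (ℓ!/M₀^ℓ) · ∑_{p ⊆ {1,…,M}, |p| = ℓ} R̂^{CV}_p ] = E[ R_{D(𝐎)} ], where R_{D(𝐎)} denotes the (random) true mean reward R_k of the arm k = D(𝐎) chosen by the rule on the full M-unit dataset. -/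
open MeasureTheory ProbabilityTheory Real NNReal ENNReal

/-!
Condition on `M = n`. For a fold `p` of size `ℓ`, the arm chosen from the remaining `n - ℓ`
units is independent of the held-out units of `p`, so each held-out reward has conditional mean
the true reward of the chosen arm; and since units are i.i.d. within arms, relabelling the
remaining units as `0, …, n - ℓ - 1` does not change the law of that arm. Hence the fold sum has
mean `C(n, ℓ) · E[R_{D_{n-ℓ}}]`, and the Poisson identity
`P(M = n) · (ℓ! / M₀^ℓ) · C(n, ℓ) = P(M = n - ℓ)` turns the mixture over `n` into
`∑ₙ P(M = n) · E[R_{D_n}] = E[R_{D(𝐎)}]`.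
-/

namespace ProbabilityTheory

variable {Ω : Type*} [MeasurableSpace Ω] {P : Measure Ω}

theorem abs_integral_le_of_abs_le [IsProbabilityMeasure P] {g : Ω → ℝ} {C : ℝ}
    (h : ∀ ω, |g ω| ≤ C) : |∫ ω, g ω ∂P| ≤ C := by
  simpa using norm_integral_le_of_norm_le_const (μ := P) (f := g) (ae_of_all _ h)

theorem integral_apply_eq_tsum_of_indepFun [IsFiniteMeasure P] {α : Type*} [Countable α]
    [MeasurableSpace α] [MeasurableSingletonClass α] {A : Ω → α} (hA : Measurable A)
    {Y : α → Ω → ℝ} (hY : ∀ a, AEStronglyMeasurable (Y a) P)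
    (hind : ∀ a, IndepFun A (Y a) P) {B : α → ℝ} (hB : ∀ a ω, |Y a ω| ≤ B a)
    (hsum : Summable fun a => P.real (A ⁻¹' {a}) * B a) :
    ∫ ω, Y (A ω) ω ∂P = ∑' a, P.real (A ⁻¹' {a}) * ∫ ω, Y a ω ∂P := by
  have hAa : ∀ a, MeasurableSet (A ⁻¹' {a}) := fun a => hA (measurableSet_singleton a)
  have hpt : ∀ ω, Y (A ω) ω = ∑' a, (A ⁻¹' {a}).indicator (Y a) ω := fun ω => by
    rw [tsum_eq_single (A ω) fun a ha =>
      Set.indicator_of_notMem (s := A ⁻¹' {a}) (Ne.symm ha) (Y a),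
      Set.indicator_of_mem (s := A ⁻¹' {A ω}) rfl]
  have hterm : ∀ a, ∫⁻ ω, ‖(A ⁻¹' {a}).indicator (Y a) ω‖ₑ ∂P
      ≤ ENNReal.ofReal (P.real (A ⁻¹' {a}) * B a) := fun a => by
    simp_rw [enorm_indicator_eq_indicator_enorm]
    rw [lintegral_indicator (hAa a)]
    calc ∫⁻ ω in A ⁻¹' {a}, ‖Y a ω‖ₑ ∂P ≤ ∫⁻ _ in A ⁻¹' {a}, ENNReal.ofReal (B a) ∂P :=
          lintegral_mono fun ω => by
            rw [← ofReal_norm]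
            exact ENNReal.ofReal_le_ofReal (hB a ω)
      _ = ENNReal.ofReal (P.real (A ⁻¹' {a}) * B a) := by
          rw [setLIntegral_const, ENNReal.ofReal_mul measureReal_nonneg, ofReal_measureReal,
            mul_comm]
  rw [integral_congr_ae (ae_of_all _ hpt), integral_tsum (fun a => (hY a).indicator (hAa a))
    (ne_top_of_le_ne_top hsum.tsum_ofReal_ne_top (ENNReal.tsum_le_tsum hterm))]
  refine tsum_congr fun a => ?_
  rw [integral_indicator (hAa a)]
  exact ((IndepFun_iff_Indep _ _ _).1 (hind a)).setIntegral_eq_mul (f := id) hA.comap_le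
    (hY a).aemeasurable ⟨{a}, measurableSet_singleton a, rfl⟩ aestronglyMeasurable_id

theorem integral_comp_eq_tsum_poissonMeasure [IsFiniteMeasure P] {r : ℝ≥0} {N : Ω → ℕ}
    (hN : Measurable N) (hNlaw : P.map N = poissonMeasure r) {E : Type*} [MeasurableSpace E]
    {X : Ω → E} (hX : Measurable X) (hind : IndepFun N X P) {F : ℕ → E → ℝ}
    (hF : ∀ n, Measurable (F n)) {B : ℕ → ℝ} (hB : ∀ n x, |F n x| ≤ B n)
    (hsum : Summable fun n => (poissonMeasure r).real {n} * B n) :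
    ∫ ω, F (N ω) (X ω) ∂P = ∑' n, (poissonMeasure r).real {n} * ∫ ω, F n (X ω) ∂P := by
  have hNn : ∀ n, P.real (N ⁻¹' {n}) = (poissonMeasure r).real {n} := fun n => by
    rw [← map_measureReal_apply hN (measurableSet_singleton n), hNlaw]
  simp_rw [← hNn] at hsum ⊢
  exact integral_apply_eq_tsum_of_indepFun hN (fun n => ((hF n).comp hX).aestronglyMeasurable)
    (fun n => hind.comp measurable_id (hF n)) (fun n ω => hB n (X ω)) hsum

section Reindex

variable {ι ι' β : Type*} [Fintype ι'] [MeasurableSpace β] {f : ι → Ω → β}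

theorem iIndepFun.identDistrib_comp_of_injective (hf : iIndepFun f P)
    (hmeas : ∀ i, Measurable (f i)) {e e' : ι' → ι} (he : e.Injective) (he' : e'.Injective)
    (hident : ∀ i, P.map (f (e i)) = P.map (f (e' i))) :
    IdentDistrib (fun ω i => f (e i) ω) (fun ω i => f (e' i) ω) P P where
  aemeasurable_fst := (measurable_pi_lambda _ fun i => hmeas (e i)).aemeasurable
  aemeasurable_snd := (measurable_pi_lambda _ fun i => hmeas (e' i)).aemeasurable
  map_eq := by
    rw [(hf.precomp he).map_fun_eq_pi_map fun i => (hmeas (e i)).aemeasurable,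
      (hf.precomp he').map_fun_eq_pi_map fun i => (hmeas (e' i)).aemeasurable]
    simp only [hident]

theorem iIndepFun.indepFun_comp_of_notMem_range [DecidableEq ι] (hf : iIndepFun f P)
    (hmeas : ∀ i, Measurable (f i)) {e : ι' → ι} {i : ι} (hi : i ∉ Set.range e) :
    IndepFun (fun ω j => f (e j) ω) (f i) P := by
  have hdisj : Disjoint (Finset.univ.image e) {i} := by
    simpa [Finset.disjoint_singleton_right] using hi
  exact (hf.indepFun_finset _ _ hdisj hmeas).comp
    (φ := fun w j => w ⟨e j, Finset.mem_image_of_mem e (Finset.mem_univ j)⟩)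
    (measurable_pi_lambda _ fun j => measurable_pi_apply _)
    (measurable_pi_apply ⟨i, Finset.mem_singleton_self i⟩)

end Reindex

end ProbabilityTheory

namespace Finset

variable {α : Type*} [LinearOrder α]

theorem getD_sort_mem (s : Finset α) (d : α) {j : ℕ} (hj : j < s.card) :
    (s.sort (· ≤ ·)).getD j d ∈ s := by
  rw [List.getD_eq_getElem _ _ (by simpa using hj)]
  exact (mem_sort _).1 (List.getElem_mem _)

theorem getD_sort_injOn (s : Finset α) (d : α) :
    Set.InjOn (fun j => (s.sort (· ≤ ·)).getD j d) (Set.Iio s.card) := by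
  intro i hi j hj hij
  have hi' : i < (s.sort (· ≤ ·)).length := by simpa using hi
  have hj' : j < (s.sort (· ≤ ·)).length := by simpa using hj
  simp only [List.getD_eq_getElem _ _ hi', List.getD_eq_getElem _ _ hj'] at hij
  exact (List.Nodup.getElem_inj_iff (sort_nodup _ _)).1 hij

end Finset

section Poisson

theorem summable_poissonMeasure_real (r : ℝ≥0) :
    Summable fun n => (poissonMeasure r).real {n} := by
  simpa only [poissonMeasure_real_singleton] using (hasSum_one_poissonMeasure r).summable

variable {r : ℝ≥0}

theorem summable_poissonMeasure_real_mul {g : ℕ → ℝ} {C : ℝ} (hg : ∀ n, |g n| ≤ C) :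
    Summable fun n => (poissonMeasure r).real {n} * g n :=
  ((summable_poissonMeasure_real r).mul_right C).of_norm_bounded fun n => by
    rw [norm_mul, Real.norm_of_nonneg measureReal_nonneg]
    exact mul_le_mul_of_nonneg_left (hg n) measureReal_nonneg

theorem poissonMeasure_real_singleton_mul_choose (hr : r ≠ 0) {ℓ n : ℕ} (h : ℓ ≤ n) :
    (poissonMeasure r).real {n} * (ℓ.factorial / (r : ℝ) ^ ℓ * n.choose ℓ)
      = (poissonMeasure r).real {n - ℓ} := by
  have hr' : (r : ℝ) ≠ 0 := by exact_mod_cast hr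
  rw [poissonMeasure_real_singleton, poissonMeasure_real_singleton, Nat.cast_choose ℝ h,
    ← pow_sub_mul_pow (r : ℝ) h]
  field_simp

theorem HasSum.poissonMeasure_real_choose_shift (hr : r ≠ 0) (ℓ : ℕ) {g : ℕ → ℝ} {a : ℝ}
    (h : HasSum (fun n => (poissonMeasure r).real {n} * g n) a) :
    HasSum (fun n => (poissonMeasure r).real {n} *
      (ℓ.factorial / (r : ℝ) ^ ℓ * (n.choose ℓ * g (n - ℓ)))) a := by
  set F : ℕ → ℝ := fun n => (poissonMeasure r).real {n} *
    (ℓ.factorial / (r : ℝ) ^ ℓ * (n.choose ℓ * g (n - ℓ)))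
  have hlow : ∑ n ∈ Finset.range ℓ, F n = 0 := Finset.sum_eq_zero fun n hn => by
    simp [F, Nat.choose_eq_zero_of_lt (Finset.mem_range.1 hn)]
  have hshift : (fun n => F (n + ℓ)) = fun n => (poissonMeasure r).real {n} * g n := by
    funext n
    have hw := poissonMeasure_real_singleton_mul_choose hr (Nat.le_add_left ℓ n)
    rw [Nat.add_sub_cancel] at hw
    simp only [F, Nat.add_sub_cancel, ← hw]
    ring
  simpa [hlow] using (hasSum_nat_add_iff (f := F) ℓ).1 (hshift ▸ h)

end Poisson

section CrossValidation

variable {κ β : Type*}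

def DependsOnFirst {γ : Type*} (t : ℕ) (d : (κ → ℕ → β) → γ) : Prop :=
  ∀ x y : κ → ℕ → β, (∀ k j, j < t → x k j = y k j) → d x = d y

def padData [Inhabited β] (t : ℕ) (v : κ × Fin t → β) : κ → ℕ → β :=
  fun k j => if h : j < t then v (k, ⟨j, h⟩) else default

theorem DependsOnFirst.apply_padData [Inhabited β] {γ : Type*} {t : ℕ}
    {d : (κ → ℕ → β) → γ} (hd : DependsOnFirst t d) (x : κ → ℕ → β) :
    d (padData t fun i => x i.1 i.2) = d x :=
  hd _ _ fun _ _ hj => dif_pos hj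

/-- The `j`-th unit outside the fold `p`, in increasing order (junk value `0` past the end). -/
def foldComplement (n : ℕ) (p : Finset ℕ) (j : ℕ) : ℕ :=
  ((Finset.range n \ p).sort (· ≤ ·)).getD j 0

/-- `R̂^{CV}_p` for the dataset `x` of `n` units per arm. -/
noncomputable def cvFoldReward (D : ℕ → (κ → ℕ → β) → κ) (ψ : β → ℝ) (ℓ n : ℕ) (p : Finset ℕ)
    (x : κ → ℕ → β) : ℝ :=
  (ℓ : ℝ)⁻¹ * ∑ m ∈ p, ψ (x (D (n - ℓ) fun k j => x k (foldComplement n p j)) m)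

section Fold

variable {ℓ n : ℕ} {p : Finset ℕ}

theorem card_range_sdiff_of_mem_powersetCard
    (hp : p ∈ Finset.powersetCard ℓ (Finset.range n)) : (Finset.range n \ p).card = n - ℓ := by
  obtain ⟨hsub, hcard⟩ := Finset.mem_powersetCard.1 hp
  rw [Finset.card_sdiff_of_subset hsub, Finset.card_range, hcard]

theorem foldComplement_injOn (hp : p ∈ Finset.powersetCard ℓ (Finset.range n)) :
    Set.InjOn (foldComplement n p) (Set.Iio (n - ℓ)) := by
  rw [← card_range_sdiff_of_mem_powersetCard hp]
  exact Finset.getD_sort_injOn _ 0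

theorem foldComplement_notMem (hp : p ∈ Finset.powersetCard ℓ (Finset.range n)) {j : ℕ}
    (hj : j < n - ℓ) : foldComplement n p j ∉ p := by
  rw [← card_range_sdiff_of_mem_powersetCard hp] at hj
  exact (Finset.mem_sdiff.1 (Finset.getD_sort_mem _ 0 hj)).2

end Fold

theorem abs_cvFoldReward_le {D : ℕ → (κ → ℕ → β) → κ} {ψ : β → ℝ} {C : ℝ}
    (hbdd : ∀ v, |ψ v| ≤ C) {ℓ : ℕ} (hℓ : ℓ ≠ 0) {n : ℕ} {p : Finset ℕ} (hp : p.card = ℓ)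
    (x : κ → ℕ → β) : |cvFoldReward D ψ ℓ n p x| ≤ C := by
  have hℓ' : (0 : ℝ) < ℓ := by exact_mod_cast Nat.pos_of_ne_zero hℓ
  rw [cvFoldReward, abs_mul, abs_inv, Nat.abs_cast, inv_mul_le_iff₀ hℓ']
  calc |∑ m ∈ p, ψ _| ≤ ∑ m ∈ p, |ψ _| := Finset.abs_sum_le_sum_abs _ _
    _ ≤ ∑ _m ∈ p, C := Finset.sum_le_sum fun m _ => hbdd _
    _ = ℓ * C := by rw [Finset.sum_const, hp, nsmul_eq_mul]

theorem abs_sum_cvFoldReward_le {D : ℕ → (κ → ℕ → β) → κ} {ψ : β → ℝ} {C : ℝ}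
    (hbdd : ∀ v, |ψ v| ≤ C) {ℓ : ℕ} (hℓ : ℓ ≠ 0) (n : ℕ) (x : κ → ℕ → β) :
    |∑ p ∈ Finset.powersetCard ℓ (Finset.range n), cvFoldReward D ψ ℓ n p x| ≤ n.choose ℓ * C :=
  calc _ ≤ ∑ p ∈ Finset.powersetCard ℓ (Finset.range n), |cvFoldReward D ψ ℓ n p x| :=
        Finset.abs_sum_le_sum_abs _ _
    _ ≤ ∑ _p ∈ Finset.powersetCard ℓ (Finset.range n), C :=
        Finset.sum_le_sum fun p hp =>
          abs_cvFoldReward_le hbdd hℓ (Finset.mem_powersetCard.1 hp).2 x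
    _ = n.choose ℓ * C := by
        rw [Finset.sum_const, Finset.card_powersetCard, Finset.card_range, nsmul_eq_mul]

section Measurability

variable [MeasurableSpace β]

theorem measurable_padData [Inhabited β] (t : ℕ) : Measurable (padData (κ := κ) (β := β) t) := by
  refine measurable_pi_lambda _ fun k => measurable_pi_lambda _ fun j => ?_
  by_cases h : j < t
  · simpa only [padData, dif_pos h] using measurable_pi_apply (k, (⟨j, h⟩ : Fin t))
  · simpa only [padData, dif_neg h] using measurable_const

theorem measurable_reindex_units (s : ℕ → ℕ) :
    Measurable fun (x : κ → ℕ → β) k j => x k (s j) :=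
  measurable_pi_lambda _ fun k => measurable_pi_lambda _ fun j =>
    (measurable_pi_apply (s j)).comp (measurable_pi_apply k)

variable [MeasurableSpace κ] [Countable κ] [MeasurableSingletonClass κ]

theorem measurable_eval_rule {ψ : β → ℝ} (hψ : Measurable ψ) {d : (κ → ℕ → β) → κ}
    (hd : Measurable d) (m : ℕ) : Measurable fun x : κ → ℕ → β => ψ (x (d x) m) :=
  (measurable_from_prod_countable_left (f := fun q : (κ → ℕ → β) × κ => ψ (q.1 q.2 m))
    fun k => hψ.comp ((measurable_pi_apply m).comp (measurable_pi_apply k))).comp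
    (measurable_id.prodMk hd)

theorem measurable_cvFoldReward {D : ℕ → (κ → ℕ → β) → κ} (hD : ∀ t, Measurable (D t))
    {ψ : β → ℝ} (hψ : Measurable ψ) (ℓ n : ℕ) (p : Finset ℕ) :
    Measurable (cvFoldReward D ψ ℓ n p) :=
  (Finset.measurable_sum p fun m _ =>
    measurable_eval_rule hψ ((hD _).comp (measurable_reindex_units _)) m).const_mul _

end Measurability

end CrossValidation

section Experiment

variable {Ω κ β : Type*} [MeasurableSpace Ω] {P : Measure Ω} [Fintype κ] [MeasurableSpace β]
  [Inhabited β] {O : κ → ℕ → Ω → β}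

theorem identDistrib_rule_reindex (hOmeas : ∀ k m, Measurable (O k m))
    (hOindep : iIndepFun (fun km : κ × ℕ => O km.1 km.2) P)
    (hOident : ∀ k m m', P.map (O k m) = P.map (O k m'))
    {γ : Type*} [MeasurableSpace γ] {t : ℕ} {d : (κ → ℕ → β) → γ} (hd : DependsOnFirst t d)
    (hdm : Measurable d) {s : ℕ → ℕ} (hs : Set.InjOn s (Set.Iio t)) :
    IdentDistrib (fun ω => d fun k j => O k (s j) ω) (fun ω => d fun k j => O k j ω) P P := by
  have he : Function.Injective fun i : κ × Fin t => (i.1, s i.2) := by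
    rintro ⟨k, i⟩ ⟨k', i'⟩ h
    simp only [Prod.mk.injEq] at h
    exact Prod.ext h.1 (Fin.ext (hs i.isLt i'.isLt h.2))
  have he' : Function.Injective fun i : κ × Fin t => (i.1, (i.2 : ℕ)) := by
    rintro ⟨k, i⟩ ⟨k', i'⟩ h
    simp only [Prod.mk.injEq] at h
    exact Prod.ext h.1 (Fin.ext h.2)
  have h := (hOindep.identDistrib_comp_of_injective (fun km => hOmeas km.1 km.2) he he'
    fun i => hOident i.1 _ _).comp (hdm.comp (measurable_padData t))
  convert h using 1 <;> funext ω <;> exact (hd.apply_padData _).symm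

theorem indepFun_rule_heldOut (hOmeas : ∀ k m, Measurable (O k m))
    (hOindep : iIndepFun (fun km : κ × ℕ => O km.1 km.2) P)
    {γ : Type*} [MeasurableSpace γ] {t : ℕ} {d : (κ → ℕ → β) → γ} (hd : DependsOnFirst t d)
    (hdm : Measurable d) {s : ℕ → ℕ} {m : ℕ} (hsm : ∀ j < t, s j ≠ m) (k : κ) :
    IndepFun (fun ω => d fun k j => O k (s j) ω) (O k m) P := by
  classical
  have hk : (k, m) ∉ Set.range fun i : κ × Fin t => (i.1, s i.2) := by
    rintro ⟨i, hi⟩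
    exact hsm i.2 i.2.isLt (Prod.ext_iff.1 hi).2
  have h := (hOindep.indepFun_comp_of_notMem_range (fun km => hOmeas km.1 km.2) hk).comp
    (hdm.comp (measurable_padData t)) measurable_id
  convert h using 1
  exacts [funext fun ω => (hd.apply_padData _).symm, rfl]

variable [IsProbabilityMeasure P] [MeasurableSpace κ] [MeasurableSingletonClass κ]

theorem integral_reward_heldOut (hOmeas : ∀ k m, Measurable (O k m))
    (hOindep : iIndepFun (fun km : κ × ℕ => O km.1 km.2) P)
    (hOident : ∀ k m m', P.map (O k m) = P.map (O k m'))
    {ψ : β → ℝ} (hψ : Measurable ψ) {C : ℝ} (hbdd : ∀ v, |ψ v| ≤ C)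
    {R : κ → ℝ} (hR : ∀ k m, ∫ ω, ψ (O k m ω) ∂P = R k)
    {t : ℕ} {d : (κ → ℕ → β) → κ} (hd : DependsOnFirst t d) (hdm : Measurable d)
    {s : ℕ → ℕ} (hs : Set.InjOn s (Set.Iio t)) {m : ℕ} (hsm : ∀ j < t, s j ≠ m) :
    ∫ ω, ψ (O (d fun k j => O k (s j) ω) m ω) ∂P = ∫ ω, R (d fun k j => O k j ω) ∂P := by
  set A : Ω → κ := fun ω => d fun k j => O k (s j) ω
  have hA : Measurable A :=
    hdm.comp (measurable_pi_lambda _ fun k => measurable_pi_lambda _ fun j => hOmeas k (s j))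
  have hRA := integral_apply_eq_tsum_of_indepFun hA (Y := fun k _ => R k)
    (fun _ => aestronglyMeasurable_const) (fun k => indepFun_const_right (μ := P) A (R k))
    (B := fun k => |R k|) (fun _ _ => le_rfl) Summable.of_finite
  calc ∫ ω, ψ (O (A ω) m ω) ∂P = ∑' k, P.real (A ⁻¹' {k}) * ∫ ω, ψ (O k m ω) ∂P :=
        integral_apply_eq_tsum_of_indepFun hA
          (fun k => (hψ.comp (hOmeas k m)).aestronglyMeasurable)
          (fun k => (indepFun_rule_heldOut hOmeas hOindep hd hdm hsm k).comp measurable_id hψ)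
          (B := fun _ => C) (fun _ _ => hbdd _) Summable.of_finite
    _ = ∫ ω, R (A ω) ∂P := by
        simp only [hR, hRA, integral_const, probReal_univ, smul_eq_mul, one_mul]
    _ = ∫ ω, R (d fun k j => O k j ω) ∂P :=
        ((identDistrib_rule_reindex hOmeas hOindep hOident hd hdm hs).comp
          (measurable_of_countable R)).integral_eq

theorem integral_cvFoldReward (hOmeas : ∀ k m, Measurable (O k m))
    (hOindep : iIndepFun (fun km : κ × ℕ => O km.1 km.2) P)
    (hOident : ∀ k m m', P.map (O k m) = P.map (O k m'))
    {ψ : β → ℝ} (hψ : Measurable ψ) {C : ℝ} (hbdd : ∀ v, |ψ v| ≤ C)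
    {R : κ → ℝ} (hR : ∀ k m, ∫ ω, ψ (O k m ω) ∂P = R k)
    {D : ℕ → (κ → ℕ → β) → κ} (hD : ∀ t, Measurable (D t))
    (hDlocal : ∀ t, DependsOnFirst t (D t))
    {ℓ n : ℕ} (hℓ : ℓ ≠ 0) {p : Finset ℕ} (hp : p ∈ Finset.powersetCard ℓ (Finset.range n)) :
    ∫ ω, cvFoldReward D ψ ℓ n p (fun k m => O k m ω) ∂P
      = ∫ ω, R (D (n - ℓ) fun k m => O k m ω) ∂P := by
  have hO : Measurable fun ω k m => O k m ω :=
    measurable_pi_lambda _ fun k => measurable_pi_lambda _ (hOmeas k)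
  have hint : ∀ m, Integrable
      (fun ω => ψ (O (D (n - ℓ) fun k j => O k (foldComplement n p j) ω) m ω)) P := fun m =>
    .of_bound ((measurable_eval_rule hψ ((hD _).comp (measurable_reindex_units _)) m).comp
      hO).aestronglyMeasurable C (ae_of_all _ fun _ => hbdd _)
  have hterm : ∀ m ∈ p,
      ∫ ω, ψ (O (D (n - ℓ) fun k j => O k (foldComplement n p j) ω) m ω) ∂P
        = ∫ ω, R (D (n - ℓ) fun k m => O k m ω) ∂P := fun m hm =>
    integral_reward_heldOut hOmeas hOindep hOident hψ hbdd hR (hDlocal _) (hD _)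
      (foldComplement_injOn hp) fun j hj h => foldComplement_notMem hp hj (h ▸ hm)
  have hℓ' : (ℓ : ℝ) ≠ 0 := Nat.cast_ne_zero.2 hℓ
  simp only [cvFoldReward]
  rw [integral_const_mul, integral_finsetSum _ fun m _ => hint m, Finset.sum_congr rfl hterm,
    Finset.sum_const, (Finset.mem_powersetCard.1 hp).2, nsmul_eq_mul, inv_mul_cancel_left₀ hℓ']

theorem integral_sum_cvFoldReward (hOmeas : ∀ k m, Measurable (O k m))
    (hOindep : iIndepFun (fun km : κ × ℕ => O km.1 km.2) P)
    (hOident : ∀ k m m', P.map (O k m) = P.map (O k m'))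
    {ψ : β → ℝ} (hψ : Measurable ψ) {C : ℝ} (hbdd : ∀ v, |ψ v| ≤ C)
    {R : κ → ℝ} (hR : ∀ k m, ∫ ω, ψ (O k m ω) ∂P = R k)
    {D : ℕ → (κ → ℕ → β) → κ} (hD : ∀ t, Measurable (D t))
    (hDlocal : ∀ t, DependsOnFirst t (D t))
    {ℓ : ℕ} (hℓ : ℓ ≠ 0) (n : ℕ) :
    ∫ ω, ∑ p ∈ Finset.powersetCard ℓ (Finset.range n),
        cvFoldReward D ψ ℓ n p (fun k m => O k m ω) ∂P
      = n.choose ℓ * ∫ ω, R (D (n - ℓ) fun k m => O k m ω) ∂P := by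
  have hO : Measurable fun ω k m => O k m ω :=
    measurable_pi_lambda _ fun k => measurable_pi_lambda _ (hOmeas k)
  have hint : ∀ p ∈ Finset.powersetCard ℓ (Finset.range n),
      Integrable (fun ω => cvFoldReward D ψ ℓ n p (fun k m => O k m ω)) P := fun p hp =>
    .of_bound ((measurable_cvFoldReward hD hψ ℓ n p).comp hO).aestronglyMeasurable C
      (ae_of_all _ fun _ => abs_cvFoldReward_le hbdd hℓ (Finset.mem_powersetCard.1 hp).2 _)
  rw [integral_finsetSum _ hint, Finset.sum_congr rfl fun p hp =>
    integral_cvFoldReward hOmeas hOindep hOident hψ hbdd hR hD hDlocal hℓ hp, Finset.sum_const,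
    Finset.card_powersetCard, Finset.card_range, nsmul_eq_mul]

end Experiment

theorem leave_ell_out_cv_unbiased_poisson_general
    {Ωs : Type*} [MeasurableSpace Ωs] (P : Measure Ωs) [IsProbabilityMeasure P]
    (J K : ℕ)
    (O : Fin K → ℕ → Ωs → (Fin J → ℝ))
    (hOmeas : ∀ k m, Measurable (O k m))
    -- independence across all arms and units:
    (hOindep : iIndepFun
      (fun km : Fin K × ℕ => O km.1 km.2) P)
    -- within each arm the observations are identically distributed:
    (hOident : ∀ k m m', Measure.map (O k m) P = Measure.map (O k m') P)
    (ψ : (Fin J → ℝ) → ℝ) (hψ : Measurable ψ) (C : ℝ) (hbdd : ∀ v, |ψ v| ≤ C)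
    -- the true mean reward of each arm:
    (R : Fin K → ℝ) (hR : ∀ k m, ∫ ω, ψ (O k m ω) ∂P = R k)
    -- the Poisson sample size, independent of all observations:
    (M₀ : ℝ≥0) (hM₀ : 0 < M₀) (M : Ωs → ℕ) (hM : Measurable M)
    (hMpoisson : Measure.map M P = poissonMeasure M₀)
    (hMindep : IndepFun M (fun ω => fun km : Fin K × ℕ => O km.1 km.2 ω) P)
    -- the decision rule: for each dataset size `t`, a measurable map reading only the
    -- first `t` units of each arm:
    (D : ℕ → (Fin K → ℕ → (Fin J → ℝ)) → Fin K)
    (hDmeas : ∀ t, Measurable (D t))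
    (hDlocal : ∀ t, ∀ data data' : Fin K → ℕ → (Fin J → ℝ),
      (∀ k j, j < t → data k j = data' k j) → D t data = D t data')
    (ℓ : ℕ) (hℓ : 1 ≤ ℓ)
    -- the rule applied to the full dataset:
    (DecFull : Ωs → Fin K)
    (hDecFull : DecFull = fun ω => D (M ω) (fun k m => O k m ω))
    -- the rule applied to the dataset with the fold `p` removed, remaining units taken
    -- in increasing order:
    (DecCV : Ωs → Finset ℕ → Fin K)
    (hDecCV : DecCV = fun ω p => D (M ω - ℓ)
      (fun k j => O k (((Finset.range (M ω) \ p).sort (· ≤ ·)).getD j 0) ω))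
    -- the cross-validation estimator on fold `p`:
    (RCV : Ωs → Finset ℕ → ℝ)
    (hRCV : RCV = fun ω p => (ℓ : ℝ)⁻¹ * ∑ m ∈ p, ψ (O (DecCV ω p) m ω)) :
    ∫ ω, ((Nat.factorial ℓ : ℝ) / (M₀ : ℝ) ^ ℓ) *
        ∑ p ∈ Finset.powersetCard ℓ (Finset.range (M ω)), RCV ω p ∂P =
      ∫ ω, R (DecFull ω) ∂P := by
  subst hRCV hDecCV hDecFull
  set c : ℝ := (Nat.factorial ℓ : ℝ) / (M₀ : ℝ) ^ ℓ
  set f : ℕ → ℝ := fun t => ∫ ω, R (D t (fun k m => O k m ω)) ∂P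
  have hℓ' : ℓ ≠ 0 := by omega
  have hX : Measurable fun ω k m => O k m ω :=
    measurable_pi_lambda _ fun k => measurable_pi_lambda _ (hOmeas k)
  have hMX : IndepFun M (fun ω k m => O k m ω) P := hMindep.comp measurable_id
    (measurable_pi_lambda _ fun k => measurable_pi_lambda _ fun m => measurable_pi_apply (k, m))
  have hRbdd : ∀ k, |R k| ≤ C := fun k => hR k 0 ▸ abs_integral_le_of_abs_le fun _ => hbdd _
  have hPoC := (summable_poissonMeasure_real M₀).mul_right C
  calc _ = ∑' n, (poissonMeasure M₀).real {n} *
          ∫ ω, c * ∑ p ∈ Finset.powersetCard ℓ (Finset.range n),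
            cvFoldReward D ψ ℓ n p (fun k m => O k m ω) ∂P :=
        integral_comp_eq_tsum_poissonMeasure hM hMpoisson hX hMX
          (fun n => (Finset.measurable_sum _ fun p _ =>
            measurable_cvFoldReward hDmeas hψ ℓ n p).const_mul c)
          (B := fun n => c * (n.choose ℓ * C))
          (fun n x => by
            rw [abs_mul, abs_of_nonneg (by positivity)]
            exact mul_le_mul_of_nonneg_left (abs_sum_cvFoldReward_le hbdd hℓ' n x) (by positivity))
          (hPoC.hasSum.poissonMeasure_real_choose_shift hM₀.ne' ℓ).summable
    _ = ∑' n, (poissonMeasure M₀).real {n} * (c * (n.choose ℓ * f (n - ℓ))) := by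
        simp_rw [integral_const_mul,
          integral_sum_cvFoldReward hOmeas hOindep hOident hψ hbdd hR hDmeas hDlocal hℓ']
        rfl
    _ = ∑' n, (poissonMeasure M₀).real {n} * f n :=
        ((summable_poissonMeasure_real_mul (g := f) fun _ => abs_integral_le_of_abs_le fun _ =>
          hRbdd _).hasSum.poissonMeasure_real_choose_shift hM₀.ne' ℓ).tsum_eq
    _ = _ := (integral_comp_eq_tsum_poissonMeasure hM hMpoisson hX hMX
          (F := fun n x => R (D n x)) (fun n => (measurable_of_countable R).comp (hDmeas n))
          (fun _ _ => hRbdd _) hPoC).symm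

/-- unbiasedness of leave-`ℓ`-out cross-validation under Poisson sample
sizes: A single experiment with `K ≥ 1` arms; for each arm `k` the observations
`(O k m)_{m ∈ ℕ}` form an i.i.d. sequence in `ℝ^J`, independent across arms and units;
`ψ` is a bounded measurable reward with arm means `R k`; the sample size `M` is
`Poisson(M₀)` (`M₀ > 0`), independent of all observations.  A decision rule is a family
`D t` of measurable maps from `K`-armed datasets with `t` units per arm (encoded as
infinite sequences read only on their first `t` coordinates) to an arm.  For each fold
`p ⊆ {0,…,M−1}` with `|p| = ℓ` (`ℓ ≥ 1`), the rule is applied to the remaining units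
taken in increasing order, `D(𝐎_{−p})`, and
`R̂^{CV}_p = ℓ⁻¹ ∑_{m ∈ p} ψ(O_{D(𝐎_{−p}), m})`.  Then
`E[(ℓ!/M₀^ℓ) ∑_{|p| = ℓ} R̂^{CV}_p] = E[R_{D(𝐎)}]`, where `D(𝐎)` is the rule applied
to the full `M`-unit dataset. -/
theorem leave_ell_out_cv_unbiased_poisson
    {Ωs : Type*} [MeasurableSpace Ωs] (P : Measure Ωs) [IsProbabilityMeasure P]
    (J K : ℕ) (hK : 1 ≤ K)
    (O : Fin K → ℕ → Ωs → (Fin J → ℝ))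
    (hOmeas : ∀ k m, Measurable (O k m))
    -- independence across all arms and units:
    (hOindep : iIndepFun
      (fun km : Fin K × ℕ => O km.1 km.2) P)
    -- within each arm the observations are identically distributed:
    (hOident : ∀ k m m', Measure.map (O k m) P = Measure.map (O k m') P)
    (ψ : (Fin J → ℝ) → ℝ) (hψ : Measurable ψ) (C : ℝ) (hbdd : ∀ v, |ψ v| ≤ C)
    -- the true mean reward of each arm:
    (R : Fin K → ℝ) (hR : ∀ k m, ∫ ω, ψ (O k m ω) ∂P = R k)
    -- the Poisson sample size, independent of all observations:
    (M₀ : ℝ≥0) (hM₀ : 0 < M₀) (M : Ωs → ℕ) (hM : Measurable M)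
    (hMpoisson : Measure.map M P = poissonMeasure M₀)
    (hMindep : IndepFun M (fun ω => fun km : Fin K × ℕ => O km.1 km.2 ω) P)
    -- the decision rule: for each dataset size `t`, a measurable map reading only the
    -- first `t` units of each arm:
    (D : ℕ → (Fin K → ℕ → (Fin J → ℝ)) → Fin K)
    (hDmeas : ∀ t, Measurable (D t))
    (hDlocal : ∀ t, ∀ data data' : Fin K → ℕ → (Fin J → ℝ),
      (∀ k j, j < t → data k j = data' k j) → D t data = D t data')
    (ℓ : ℕ) (hℓ : 1 ≤ ℓ)
    -- the rule applied to the full dataset: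
    (DecFull : Ωs → Fin K)
    (hDecFull : DecFull = fun ω => D (M ω) (fun k m => O k m ω))
    -- the rule applied to the dataset with the fold `p` removed, remaining units taken
    -- in increasing order:
    (DecCV : Ωs → Finset ℕ → Fin K)
    (hDecCV : DecCV = fun ω p => D (M ω - ℓ)
      (fun k j => O k (((Finset.range (M ω) \ p).sort (· ≤ ·)).getD j 0) ω))
    -- the cross-validation estimator on fold `p`:
    (RCV : Ωs → Finset ℕ → ℝ)
    (hRCV : RCV = fun ω p => (ℓ : ℝ)⁻¹ * ∑ m ∈ p, ψ (O (DecCV ω p) m ω)) :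
    ∫ ω, ((Nat.factorial ℓ : ℝ) / (M₀ : ℝ) ^ ℓ) *
        ∑ p ∈ Finset.powersetCard ℓ (Finset.range (M ω)), RCV ω p ∂P =
      ∫ ω, R (DecFull ω) ∂P :=
  leave_ell_out_cv_unbiased_poisson_general P J K O hOmeas hOindep hOident ψ hψ C hbdd R hR M₀ hM₀ M
    hM hMpoisson hMindep D hDmeas hDlocal ℓ hℓ DecFull hDecFull DecCV hDecCV RCV hRCV
end

section
/- Let N be a Poisson(λ) random variable (λ > 0), let (Y_m)_{m≥1} be i.i.d. real random variables independent of N with |Y_1| ≤ C almost surely (C > 0), and set X := λ^{−1} ∑_{m=1}^{N} Y_m. Then E[X] = E[Y_1], and for every real s with |s| · C ≤ λ: E[ exp( s (X − E[Y_1]) ) ] ≤ exp( s² E[Y_1²] / λ ) ≤ exp( s² C² / λ ). -/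
/-!
Since `N` is independent of `(Y_m)`, conditioning on `{N = n}` turns `E[f(∑_{m<N} Y_m)]` into the
Poisson average `∑ₙ e^{-λ} λⁿ/n! · E[f(∑_{m<n} Y_m)]`. For `f = id` this is Wald's identity
`E[∑_{m<N} Y_m] = λ E[Y₁]`; for `f = exp(t ·)` independence gives `E[f(∑_{m<n} Y_m)] = M(t)ⁿ` with
`M` the mgf of `Y₁`, so the compound sum has mgf `exp(λ (M(t) - 1))`. Taking `t = s/λ` makes
`|t Y₁| ≤ 1`, where `eᵘ ≤ 1 + u + u²`; hence `λ (M(t) - 1) ≤ s E[Y₁] + s² E[Y₁²]/λ`.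
-/

open MeasureTheory ProbabilityTheory Real NNReal ENNReal Finset
open scoped Nat

namespace ProbabilityTheory

lemma hasSum_poissonMeasure_mul_pow (r : ℝ≥0) (x : ℝ) :
    HasSum (fun n => exp (-r) * r ^ n / n ! * x ^ n) (exp (r * (x - 1))) := by
  have hterm : (fun n => exp (-r) * r ^ n / n ! * x ^ n)
      = fun n => exp (-r) * ((r * x) ^ n / n !) := by
    ext n
    rw [mul_pow]
    ring
  rw [hterm, show (r : ℝ) * (x - 1) = -r + r * x by ring, exp_add, exp_eq_exp_ℝ]
  exact (NormedSpace.expSeries_div_hasSum_exp ((r : ℝ) * x)).mul_left _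

lemma hasSum_poissonMeasure_mul_natCast (r : ℝ≥0) :
    HasSum (fun n : ℕ => exp (-r) * r ^ n / n ! * n) r := by
  have hterm : (fun n : ℕ => exp (-r) * r ^ (n + 1) / (n + 1) ! * (n + 1 : ℕ))
      = fun n => r * (exp (-r) * r ^ n / n !) := by
    ext n
    rw [Nat.factorial_succ]
    push_cast
    field_simp
    ring
  have h := (hasSum_one_poissonMeasure r).mul_left (r : ℝ)
  rw [← hterm, mul_one] at h
  exact (hasSum_nat_add_iff' 1).mp (by simpa using h)

lemma integrable_pow_poissonMeasure (r : ℝ≥0) (x : ℝ) :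
    Integrable (fun n : ℕ => x ^ n) (poissonMeasure r) :=
  integrable_poissonMeasure_iff.2 <| by
    simpa only [norm_pow, norm_eq_abs] using (hasSum_poissonMeasure_mul_pow r |x|).summable

lemma integrable_natCast_poissonMeasure (r : ℝ≥0) :
    Integrable (fun n : ℕ => (n : ℝ)) (poissonMeasure r) :=
  integrable_poissonMeasure_iff.2 <| by
    simpa only [norm_natCast] using (hasSum_poissonMeasure_mul_natCast r).summable

section RandomIndex

variable {Ω ι β : Type*} [MeasurableSpace Ω] [MeasurableSpace ι] [MeasurableSpace β]
  [Countable ι] [MeasurableSingletonClass ι] {P : Measure Ω} {N : Ω → ι} {Z : Ω → β}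
  {G : ι → β → ℝ}

lemma measurable_comp_of_countable (hN : Measurable N) (hZ : Measurable Z)
    (hG : ∀ i, Measurable (G i)) : Measurable fun ω => G (N ω) (Z ω) :=
  (measurable_from_prod_countable_right (f := fun p : ι × β => G p.1 p.2) hG).comp
    (hN.prodMk hZ)

lemma integrable_comp_of_abs_le (hN : Measurable N) (hZ : Measurable Z)
    (hG : ∀ i, Measurable (G i)) {B : ι → ℝ} (hB : Integrable B (P.map N))
    (hGB : ∀ᵐ ω ∂P, |G (N ω) (Z ω)| ≤ B (N ω)) :
    Integrable (fun ω => G (N ω) (Z ω)) P :=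
  (hB.comp_measurable hN).mono' (measurable_comp_of_countable hN hZ hG).aestronglyMeasurable hGB

theorem IndepFun.hasSum_integral_comp (hNZ : IndepFun N Z P) (hN : Measurable N)
    (hZ : Measurable Z) (hG : ∀ i, Measurable (G i))
    (hint : Integrable (fun ω => G (N ω) (Z ω)) P) :
    HasSum (fun i => P.real (N ⁻¹' {i}) * ∫ ω, G i (Z ω) ∂P) (∫ ω, G (N ω) (Z ω) ∂P) := by
  have hfiber : ∀ i, MeasurableSet (N ⁻¹' {i}) := fun i => hN (measurableSet_singleton i)
  have hcover : ⋃ i, N ⁻¹' {i} = Set.univ := by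
    ext ω; simp
  have h := hasSum_integral_iUnion hfiber (pairwise_disjoint_fiber N)
    (by rw [hcover]; exact hint.integrableOn)
  rw [hcover, setIntegral_univ] at h
  refine h.congr_fun fun i => ?_
  rw [setIntegral_congr_fun (hfiber i) fun ω (hω : N ω = i) => by rw [hω]]
  exact (((IndepFun_iff_Indep N Z P).1 hNZ).setIntegral_eq_mul hN.comap_le hZ.aemeasurable
    ⟨{i}, measurableSet_singleton i, rfl⟩ (hG i).aestronglyMeasurable).symm

end RandomIndex

lemma mgf_le_one_add_of_abs_le {Ω : Type*} [MeasurableSpace Ω] {P : Measure Ω}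
    [IsProbabilityMeasure P] {X : Ω → ℝ} {C t : ℝ} (hX : AEMeasurable X P)
    (hXC : ∀ᵐ ω ∂P, |X ω| ≤ C) (htC : |t| * C ≤ 1) :
    mgf X P t ≤ 1 + t * ∫ ω, X ω ∂P + t ^ 2 * ∫ ω, X ω ^ 2 ∂P := by
  have htX : ∀ᵐ ω ∂P, |t * X ω| ≤ 1 := hXC.mono fun ω h => by
    rw [abs_mul]
    exact (mul_le_mul_of_nonneg_left h (abs_nonneg t)).trans htC
  have hpoint : ∀ᵐ ω ∂P, exp (t * X ω) ≤ 1 + t * X ω + t ^ 2 * X ω ^ 2 := htX.mono fun ω h => by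
    have := (abs_le.1 (abs_exp_sub_one_sub_id_le h)).2
    linarith
  have hXint : Integrable X P := Integrable.of_bound hX.aestronglyMeasurable C hXC
  have hX2int : Integrable (fun ω => X ω ^ 2) P :=
    Integrable.of_bound (hX.pow_const 2).aestronglyMeasurable (C ^ 2) <| hXC.mono fun ω h => by
      rw [norm_pow, norm_eq_abs]
      exact pow_le_pow_left₀ (abs_nonneg _) h 2
  have hexpint : Integrable (fun ω => exp (t * X ω)) P :=
    Integrable.of_bound (hX.const_mul t).exp.aestronglyMeasurable (exp 1) <| htX.mono fun ω h => by
      rw [norm_eq_abs, abs_exp]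
      exact exp_le_exp.2 ((le_abs_self _).trans h)
  have hlin : Integrable (fun ω => 1 + t * X ω) P := (integrable_const 1).add (hXint.const_mul t)
  have hquad : Integrable (fun ω => t ^ 2 * X ω ^ 2) P := hX2int.const_mul _
  calc mgf X P t ≤ ∫ ω, (1 + t * X ω + t ^ 2 * X ω ^ 2) ∂P :=
        integral_mono_ae hexpint (hlin.add hquad) hpoint
    _ = 1 + t * ∫ ω, X ω ∂P + t ^ 2 * ∫ ω, X ω ^ 2 ∂P := by
        rw [integral_add hlin hquad, integral_add (integrable_const 1) (hXint.const_mul t),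
          integral_const_mul, integral_const_mul]
        simp

section CompoundPoisson

variable {Ω : Type*} [MeasurableSpace Ω] {P : Measure Ω} {r : ℝ≥0}
  {N : Ω → ℕ} {Y : ℕ → Ω → ℝ} {C : ℝ}

lemma ae_abs_sum_range_le (hbdd : ∀ m, ∀ᵐ ω ∂P, |Y m ω| ≤ C) :
    ∀ᵐ ω ∂P, ∀ n : ℕ, |∑ m ∈ range n, Y m ω| ≤ n * C := by
  filter_upwards [ae_all_iff.2 hbdd] with ω hω n
  calc |∑ m ∈ range n, Y m ω| ≤ ∑ m ∈ range n, |Y m ω| := abs_sum_le_sum_abs _ _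
    _ ≤ ∑ _m ∈ range n, C := sum_le_sum fun m _ => hω m
    _ = n * C := by simp

lemma hasSum_integral_comp_sum_range_of_poisson (hN : Measurable N)
    (hpoisson : P.map N = poissonMeasure r) (hYmeas : ∀ m, Measurable (Y m))
    (hNY : IndepFun N (fun ω m => Y m ω) P) {f : ℝ → ℝ} (hf : Measurable f)
    (hint : Integrable (fun ω => f (∑ m ∈ range (N ω), Y m ω)) P) :
    HasSum (fun n => exp (-r) * r ^ n / n ! * ∫ ω, f (∑ m ∈ range n, Y m ω) ∂P)
      (∫ ω, f (∑ m ∈ range (N ω), Y m ω) ∂P) := by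
  have hlaw : ∀ n, P.real (N ⁻¹' {n}) = exp (-r) * r ^ n / n ! := fun n => by
    rw [← map_measureReal_apply hN (measurableSet_singleton n), hpoisson,
      poissonMeasure_real_singleton]
  simpa only [hlaw] using hNY.hasSum_integral_comp (G := fun n y => f (∑ m ∈ range n, y m)) hN
    (measurable_pi_lambda _ hYmeas) (fun n => hf.comp (by fun_prop)) hint

theorem integral_sum_range_of_poisson [IsProbabilityMeasure P] (hN : Measurable N)
    (hpoisson : P.map N = poissonMeasure r) (hYmeas : ∀ m, Measurable (Y m))
    (hident : ∀ m, IdentDistrib (Y m) (Y 0) P P) (hNY : IndepFun N (fun ω m => Y m ω) P)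
    (hbdd : ∀ m, ∀ᵐ ω ∂P, |Y m ω| ≤ C) :
    ∫ ω, ∑ m ∈ range (N ω), Y m ω ∂P = r * ∫ ω, Y 0 ω ∂P := by
  have hint : Integrable (fun ω => ∑ m ∈ range (N ω), Y m ω) P :=
    integrable_comp_of_abs_le (G := fun n y => ∑ m ∈ range n, y m) (B := fun n => n * C) hN
      (measurable_pi_lambda _ hYmeas) (fun n => by fun_prop)
      (by rw [hpoisson]; exact (integrable_natCast_poissonMeasure r).mul_const C)
      ((ae_abs_sum_range_le hbdd).mono fun ω h => h (N ω))
  have hterm : ∀ n : ℕ, ∫ ω, ∑ m ∈ range n, Y m ω ∂P = n * ∫ ω, Y 0 ω ∂P := fun n => by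
    rw [integral_finsetSum _ fun m _ =>
      Integrable.of_bound (hYmeas m).aestronglyMeasurable C (hbdd m)]
    simp [(hident _).integral_eq]
  have h := hasSum_integral_comp_sum_range_of_poisson hN hpoisson hYmeas hNY measurable_id hint
  simp only [id, hterm, ← mul_assoc] at h
  exact h.unique ((hasSum_poissonMeasure_mul_natCast r).mul_right _)

theorem integral_exp_mul_sum_range_of_poisson (hN : Measurable N)
    (hpoisson : P.map N = poissonMeasure r) (hYmeas : ∀ m, Measurable (Y m))
    (hYindep : iIndepFun Y P) (hident : ∀ m, IdentDistrib (Y m) (Y 0) P P)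
    (hNY : IndepFun N (fun ω m => Y m ω) P) (hbdd : ∀ m, ∀ᵐ ω ∂P, |Y m ω| ≤ C) (t : ℝ) :
    ∫ ω, exp (t * ∑ m ∈ range (N ω), Y m ω) ∂P = exp (r * (mgf (Y 0) P t - 1)) := by
  have hint : Integrable (fun ω => exp (t * ∑ m ∈ range (N ω), Y m ω)) P :=
    integrable_comp_of_abs_le (G := fun n y => exp (t * ∑ m ∈ range n, y m))
      (B := fun n => exp (|t| * C) ^ n) hN (measurable_pi_lambda _ hYmeas) (fun n => by fun_prop)
      (by rw [hpoisson]; exact integrable_pow_poissonMeasure r _)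
      ((ae_abs_sum_range_le hbdd).mono fun ω h => by
        rw [abs_exp, ← exp_nat_mul, exp_le_exp]
        beta_reduce
        calc t * ∑ m ∈ range (N ω), Y m ω ≤ |t| * |∑ m ∈ range (N ω), Y m ω| := by
              rw [← abs_mul]; exact le_abs_self _
          _ ≤ |t| * (N ω * C) := mul_le_mul_of_nonneg_left (h (N ω)) (abs_nonneg t)
          _ = N ω * (|t| * C) := by ring)
  have hterm : ∀ n : ℕ, ∫ ω, exp (t * ∑ m ∈ range n, Y m ω) ∂P = mgf (Y 0) P t ^ n := fun n => by
    have h := hYindep.mgf_sum hYmeas (range n) (t := t)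
    simp only [mgf_congr_of_identDistrib _ _ (hident _), prod_const, card_range] at h
    simpa [mgf, Finset.sum_apply] using h
  have h := hasSum_integral_comp_sum_range_of_poisson hN hpoisson hYmeas hNY
    (measurable_const_mul t).exp hint
  simp only [hterm] at h
  exact h.unique (hasSum_poissonMeasure_mul_pow r _)

end CompoundPoisson

end ProbabilityTheory

theorem compound_poisson_normalized_mean_and_mgf_bound_general
    {Ω : Type*} [MeasurableSpace Ω] (P : Measure Ω) [IsProbabilityMeasure P]
    (lam : ℝ≥0) (hlam : 0 < lam)
    (N : Ω → ℕ) (hN : Measurable N)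
    (hpoisson : Measure.map N P = poissonMeasure lam)
    (Y : ℕ → Ω → ℝ) (hYmeas : ∀ m, Measurable (Y m))
    -- the `Y m` are mutually independent and identically distributed:
    (hYindep : iIndepFun Y P)
    (hYident : ∀ m, Measure.map (Y m) P = Measure.map (Y 0) P)
    -- `N` is independent of the whole sequence `(Y_m)`:
    (hNY : IndepFun N (fun ω => fun m => Y m ω) P)
    (C : ℝ)
    (hbdd : ∀ m, ∀ᵐ ω ∂P, |Y m ω| ≤ C)
    (X : Ω → ℝ) (hX : X = fun ω => ((lam : ℝ))⁻¹ * ∑ m ∈ Finset.range (N ω), Y m ω) :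
    (∫ ω, X ω ∂P = ∫ ω, Y 0 ω ∂P) ∧
      ∀ s : ℝ, |s| * C ≤ (lam : ℝ) →
        (∫ ω, Real.exp (s * (X ω - ∫ ω', Y 0 ω' ∂P)) ∂P) ≤
            Real.exp (s ^ 2 * (∫ ω, (Y 0 ω) ^ 2 ∂P) / (lam : ℝ)) ∧
          Real.exp (s ^ 2 * (∫ ω, (Y 0 ω) ^ 2 ∂P) / (lam : ℝ)) ≤
            Real.exp (s ^ 2 * C ^ 2 / (lam : ℝ)) := by
  subst hX
  have hlamR : (0 : ℝ) < lam := hlam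
  have hident : ∀ m, IdentDistrib (Y m) (Y 0) P P := fun m =>
    ⟨(hYmeas m).aemeasurable, (hYmeas 0).aemeasurable, hYident m⟩
  refine ⟨?_, fun s hs => ?_⟩
  · rw [integral_const_mul, integral_sum_range_of_poisson hN hpoisson hYmeas hident hNY hbdd]
    field_simp
  set μ := ∫ ω, Y 0 ω ∂P
  set M₂ := ∫ ω, Y 0 ω ^ 2 ∂P
  have hM₂ : M₂ ≤ C ^ 2 :=
    calc M₂ ≤ ∫ _, C ^ 2 ∂P := integral_mono_of_nonneg (ae_of_all _ fun ω => sq_nonneg _)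
          (integrable_const _) ((hbdd 0).mono fun ω h => sq_le_sq' (abs_le.1 h).1 (abs_le.1 h).2)
      _ = C ^ 2 := by simp
  refine ⟨?_, by gcongr⟩
  set t := s / lam
  have htC : |t| * C ≤ 1 := by
    rw [abs_div, abs_of_pos hlamR, div_mul_eq_mul_div, div_le_one hlamR]
    exact hs
  have hmgf := mgf_le_one_add_of_abs_le (hYmeas 0).aemeasurable (hbdd 0) htC
  calc ∫ ω, exp (s * ((lam : ℝ)⁻¹ * ∑ m ∈ range (N ω), Y m ω - μ)) ∂P
      = exp (-(s * μ)) * ∫ ω, exp (t * ∑ m ∈ range (N ω), Y m ω) ∂P := by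
        rw [← integral_const_mul]
        simp only [← exp_add, t]
        ring_nf
    _ = exp (lam * (mgf (Y 0) P t - 1) - s * μ) := by
        rw [integral_exp_mul_sum_range_of_poisson hN hpoisson hYmeas hYindep hident hNY hbdd,
          ← exp_add]
        ring_nf
    _ ≤ exp (s ^ 2 * M₂ / lam) := by
        rw [exp_le_exp]
        calc lam * (mgf (Y 0) P t - 1) - s * μ ≤ lam * (t * μ + t ^ 2 * M₂) - s * μ := by
              linarith [mul_le_mul_of_nonneg_left hmgf hlamR.le]
          _ = s ^ 2 * M₂ / lam := by
              simp only [t]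
              field_simp
              ring

/-- Let `N` be a Poisson(λ) random variable (`λ > 0`), let `(Y_m)_{m≥1}`
be i.i.d. real random variables independent of `N` with `|Y₁| ≤ C` almost surely
(`C > 0`), and set `X := λ⁻¹ ∑_{m=1}^{N} Y_m`.  Then `E[X] = E[Y₁]`, and for every
real `s` with `|s| · C ≤ λ`:
`E[exp(s (X − E[Y₁]))] ≤ exp(s² E[Y₁²] / λ) ≤ exp(s² C² / λ)`. -/
theorem compound_poisson_normalized_mean_and_mgf_bound
    {Ω : Type*} [MeasurableSpace Ω] (P : Measure Ω) [IsProbabilityMeasure P]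
    (lam : ℝ≥0) (hlam : 0 < lam)
    (N : Ω → ℕ) (hN : Measurable N)
    (hpoisson : Measure.map N P = poissonMeasure lam)
    (Y : ℕ → Ω → ℝ) (hYmeas : ∀ m, Measurable (Y m))
    -- the `Y m` are mutually independent and identically distributed:
    (hYindep : iIndepFun Y P)
    (hYident : ∀ m, Measure.map (Y m) P = Measure.map (Y 0) P)
    -- `N` is independent of the whole sequence `(Y_m)`:
    (hNY : IndepFun N (fun ω => fun m => Y m ω) P)
    (C : ℝ) (hC : 0 < C)
    (hbdd : ∀ m, ∀ᵐ ω ∂P, |Y m ω| ≤ C)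
    (X : Ω → ℝ) (hX : X = fun ω => ((lam : ℝ))⁻¹ * ∑ m ∈ Finset.range (N ω), Y m ω) :
    (∫ ω, X ω ∂P = ∫ ω, Y 0 ω ∂P) ∧
      ∀ s : ℝ, |s| * C ≤ (lam : ℝ) →
        (∫ ω, Real.exp (s * (X ω - ∫ ω', Y 0 ω' ∂P)) ∂P) ≤
            Real.exp (s ^ 2 * (∫ ω, (Y 0 ω) ^ 2 ∂P) / (lam : ℝ)) ∧
          Real.exp (s ^ 2 * (∫ ω, (Y 0 ω) ^ 2 ∂P) / (lam : ℝ)) ≤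
            Real.exp (s ^ 2 * C ^ 2 / (lam : ℝ)) :=
  compound_poisson_normalized_mean_and_mgf_bound_general P lam hlam N hN hpoisson Y hYmeas hYindep
    hYident hNY C hbdd X hX
end

section
/- In the proxy-metric model, the true expected reward of the decision rule that launches when the observed proxy effect is positive satisfies E[ τ_Y | τ̂_S > 0 ] = √(2/π) · Λ₁₂ / √( Λ₂₂ + 2Ω₂₂/M ). -/
/-!
Write `Z = τ_S + ε_S` and `v = Λ₂₂ + 2Ω₂₂/M`. For every `a`, `a τ_Y + Z` is a centered Gaussian of
variance `q a = a²Λ₁₁ + 2aΛ₁₂ + v`, hence `E[(a τ_Y + Z)⁺] = √(q a / 2π)`. The integrand is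
`|τ_Y|`-Lipschitz in `a` and, wherever `Z ≠ 0` (almost surely), differentiable at `a = 0` with
derivative `τ_Y 1_{Z > 0}`; differentiating under the integral gives
`E[τ_Y; Z > 0] = q'(0) / (2√(2π v)) = Λ₁₂ / √(2π v)`. Finally `P(Z > 0) = 1/2` by symmetry.
-/

open MeasureTheory ProbabilityTheory Real NNReal ENNReal

/-- A measure `Q` on `ℝ × ℝ` is bivariate Gaussian with mean `(μA, μB)` and covariance
matrix `[[vA, vAB], [vAB, vB]]` iff every linear functional pushes it forward to the
one-dimensional Gaussian with the corresponding mean and variance (possibly degenerate,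
i.e. a Dirac mass, when the variance vanishes). -/
def IsBivariateGaussian (Q : Measure (ℝ × ℝ)) (μA μB vA vAB vB : ℝ) : Prop :=
  ∀ a b : ℝ, Q.map (fun p => a * p.1 + b * p.2) =
    gaussianReal (a * μA + b * μB)
      (Real.toNNReal (a ^ 2 * vA + 2 * a * b * vAB + b ^ 2 * vB))

open Filter Set Topology

lemma integral_Ioi_mul_exp_neg_mul_sq {b : ℝ} (hb : 0 < b) :
    ∫ x in Ioi (0 : ℝ), x * rexp (-b * x ^ 2) = (2 * b)⁻¹ := by
  apply Complex.ofReal_injective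
  rw [← integral_complex_ofReal]
  push_cast
  exact integral_mul_cexp_neg_mul_sq (by simpa using hb)

lemma integral_max_zero_gaussianReal (v : ℝ≥0) :
    ∫ x, max x 0 ∂gaussianReal 0 v = √v / √(2 * π) := by
  rcases eq_or_ne v 0 with rfl | hv
  · simp
  have hv' : (0 : ℝ) < v := by positivity
  have hpdf : ∀ x, gaussianPDFReal 0 v x • max x 0 = (Ioi 0).indicator
      (fun x => (√(2 * π * v))⁻¹ * (x * rexp (-(2 * (v : ℝ))⁻¹ * x ^ 2))) x := by
    intro x
    rcases le_or_gt x 0 with hx | hx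
    · simp [hx, not_lt.mpr hx]
    · simp only [gaussianPDFReal, smul_eq_mul, max_eq_left hx.le, indicator_of_mem (mem_Ioi.mpr hx)]
      ring_nf
  rw [integral_gaussianReal_eq_integral_smul hv]
  simp_rw [hpdf]
  rw [integral_indicator measurableSet_Ioi, integral_const_mul,
    integral_Ioi_mul_exp_neg_mul_sq (by positivity), sqrt_mul (by positivity) (v : ℝ)]
  have h2π : √(2 * π) ≠ 0 := by positivity
  field_simp
  rw [sq_sqrt hv'.le]

lemma gaussianReal_Ioi_zero {v : ℝ≥0} (hv : v ≠ 0) : gaussianReal 0 v (Ioi 0) = 2⁻¹ := by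
  have hsymm : gaussianReal 0 v (Iic 0) = gaussianReal 0 v (Ioi 0) := by
    rw [measure_congr ((gaussianReal_absolutelyContinuous 0 hv).ae_eq Iio_ae_eq_Iic).symm]
    conv_lhs => rw [← neg_zero, ← gaussianReal_map_neg]
    rw [Measure.map_apply measurable_neg measurableSet_Iio]
    simp
  have hcompl := measure_add_measure_compl (μ := gaussianReal 0 v) (measurableSet_Ioi (a := 0))
  rw [compl_Ioi, hsymm, measure_univ, ← two_mul] at hcompl
  exact ENNReal.eq_inv_of_mul_eq_one_left (by rwa [mul_comm])

lemma hasDerivAt_max_mul_add_zero (x : ℝ) {z : ℝ} (hz : z ≠ 0) :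
    HasDerivAt (fun a => max (a * x + z) 0) (if 0 < z then x else 0) 0 := by
  have hcont : Tendsto (fun a => a * x + z) (𝓝 0) (𝓝 z) :=
    Continuous.tendsto' (by fun_prop) 0 z (by simp)
  rcases hz.lt_or_gt with hneg | hpos
  · rw [if_neg hneg.not_gt]
    refine (hasDerivAt_const 0 (0 : ℝ)).congr_of_eventuallyEq ?_
    filter_upwards [hcont.eventually (eventually_lt_nhds hneg)] with a ha
    exact max_eq_right ha.le
  · rw [if_pos hpos]
    refine (((hasDerivAt_id 0).mul_const x).add_const z |>.congr_deriv (one_mul x))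
      |>.congr_of_eventuallyEq ?_
    filter_upwards [hcont.eventually (eventually_gt_nhds hpos)] with a ha
    exact max_eq_left ha.le

lemma lipschitzWith_max_mul_add_zero (x z : ℝ) :
    LipschitzWith (nnabs x) (fun a => max (a * x + z) 0) :=
  LipschitzWith.of_dist_le_mul fun a b => by
    simp only [dist_eq_norm, norm_eq_abs, coe_nnabs]
    calc |max (a * x + z) 0 - max (b * x + z) 0| ≤ |(a * x + z) - (b * x + z)| :=
          abs_max_sub_max_le_abs _ _ _
      _ = |x| * |a - b| := by rw [← abs_mul]; ring_nf

section

variable {Ω : Type*} [MeasurableSpace Ω] {P : Measure Ω}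

lemma hasDerivAt_integral_max_mul_add_zero {X Z : Ω → ℝ} (hX : Integrable X P)
    (hZ : Integrable Z P) (hZ0 : ∀ᵐ ω ∂P, Z ω ≠ 0) :
    HasDerivAt (fun a => ∫ ω, max (a * X ω + Z ω) 0 ∂P) (∫ ω in {ω | 0 < Z ω}, X ω ∂P) 0 := by
  have hpos : NullMeasurableSet {ω | 0 < Z ω} P :=
    nullMeasurableSet_lt aemeasurable_const hZ.aemeasurable
  rw [← integral_indicator₀ hpos]
  refine (hasDerivAt_integral_of_dominated_loc_of_lip univ_mem (bound := X) ?_ ?_ ?_ ?_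
    hX ?_).2
  · exact Eventually.of_forall fun a =>
      ((hX.const_mul a).add hZ).aestronglyMeasurable.sup aestronglyMeasurable_const
  · simpa using hZ.pos_part
  · exact hX.aestronglyMeasurable.indicator₀ hpos
  · exact ae_of_all _ fun ω => (lipschitzWith_max_mul_add_zero (X ω) (Z ω)).lipschitzOnWith
  · filter_upwards [hZ0] with ω hω
    simpa [indicator_apply] using hasDerivAt_max_mul_add_zero (X ω) hω

lemma integrable_of_map_eq_gaussianReal {Y : Ω → ℝ} {m : ℝ} {v : ℝ≥0}
    (h : P.map Y = gaussianReal m v) : Integrable Y P :=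
  (⟨by rw [h]; infer_instance⟩ : HasGaussianLaw Y P).integrable

lemma ae_ne_zero_of_map_eq_gaussianReal {Y : Ω → ℝ} {v : ℝ≥0} (hv : v ≠ 0)
    (h : P.map Y = gaussianReal 0 v) : ∀ᵐ ω ∂P, Y ω ≠ 0 := by
  refine ae_of_ae_map (p := (· ≠ 0)) (integrable_of_map_eq_gaussianReal h).aemeasurable ?_
  rw [h, ae_iff]
  simpa using gaussianReal_absolutelyContinuous 0 hv (measure_singleton 0)

lemma measure_pos_eq_half_of_map_eq_gaussianReal {Y : Ω → ℝ} {v : ℝ≥0} (hv : v ≠ 0)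
    (h : P.map Y = gaussianReal 0 v) : P {ω | 0 < Y ω} = 2⁻¹ := by
  rw [← gaussianReal_Ioi_zero hv, ← h, Measure.map_apply_of_aemeasurable
    (integrable_of_map_eq_gaussianReal h).aemeasurable measurableSet_Ioi]
  rfl

section

variable {X Z : Ω → ℝ} {vX c vZ : ℝ}

lemma setIntegral_pos_of_map_mul_add_eq_gaussianReal (hvZ : 0 < vZ)
    (hlaw : ∀ a : ℝ, P.map (fun ω => a * X ω + Z ω) =
      gaussianReal 0 (a ^ 2 * vX + 2 * a * c + vZ).toNNReal) :
    ∫ ω in {ω | 0 < Z ω}, X ω ∂P = c / √(2 * π * vZ) := by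
  set q : ℝ → ℝ := fun a => a ^ 2 * vX + 2 * a * c + vZ
  have hZlaw : P.map Z = gaussianReal 0 vZ.toNNReal := by simpa using hlaw 0
  have hZ : Integrable Z P := integrable_of_map_eq_gaussianReal hZlaw
  have hX : Integrable X P :=
    ((integrable_of_map_eq_gaussianReal (hlaw 1)).sub hZ).congr (ae_of_all _ fun ω => by simp)
  have hG : ∀ a, ∫ ω, max (a * X ω + Z ω) 0 ∂P = √(q a).toNNReal / √(2 * π) := by
    intro a
    rw [← integral_max_zero_gaussianReal, ← hlaw a, integral_map
      (integrable_of_map_eq_gaussianReal (hlaw a)).aemeasurable (by fun_prop)]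
  have hq : HasDerivAt q (2 * c) 0 :=
    (((hasDerivAt_pow 2 (0 : ℝ)).mul_const vX).add
      (((hasDerivAt_id' (0 : ℝ)).const_mul 2).mul_const c)).add_const vZ |>.congr_deriv (by simp)
  have hqpos : ∀ᶠ a in 𝓝 0, 0 < q a :=
    hq.continuousAt.eventually (eventually_gt_nhds (by simpa [q] using hvZ))
  have hderiv : HasDerivAt (fun a => √(q a).toNNReal / √(2 * π)) (c / √(2 * π * vZ)) 0 := by
    have hsqrt := (hq.sqrt (by simp [q, hvZ.ne'])).div_const √(2 * π)
    refine (hsqrt.congr_deriv ?_).congr_of_eventuallyEq ?_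
    · have : √vZ ≠ 0 := by positivity
      rw [show q 0 = vZ by simp [q], sqrt_mul (by positivity : (0 : ℝ) ≤ 2 * π)]
      field_simp
    · filter_upwards [hqpos] with a ha
      rw [coe_toNNReal _ ha.le]
  refine (hasDerivAt_integral_max_mul_add_zero hX hZ
    (ae_ne_zero_of_map_eq_gaussianReal (by simpa using hvZ) hZlaw)).unique ?_
  simpa only [hG] using hderiv

theorem setIntegral_pos_div_measure_pos_of_map_mul_add_eq_gaussianReal (hvZ : 0 < vZ)
    (hlaw : ∀ a : ℝ, P.map (fun ω => a * X ω + Z ω) =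
      gaussianReal 0 (a ^ 2 * vX + 2 * a * c + vZ).toNNReal) :
    (∫ ω in {ω | 0 < Z ω}, X ω ∂P) / (P {ω | 0 < Z ω}).toReal = √(2 / π) * c / √vZ := by
  have hZlaw : P.map Z = gaussianReal 0 vZ.toNNReal := by simpa using hlaw 0
  rw [setIntegral_pos_of_map_mul_add_eq_gaussianReal hvZ hlaw,
    measure_pos_eq_half_of_map_eq_gaussianReal (by simpa using hvZ) hZlaw,
    ENNReal.toReal_inv, ENNReal.toReal_ofNat, sqrt_mul' _ hvZ.le, sqrt_mul zero_le_two,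
    sqrt_div zero_le_two]
  have : √vZ ≠ 0 := by positivity
  field_simp
  rw [sq_sqrt zero_le_two]

end

lemma quadratic_nonneg_of_sq_le {A B C : ℝ} (hA : 0 ≤ A) (hC : 0 ≤ C) (hB : B ^ 2 ≤ A * C)
    (a : ℝ) : 0 ≤ a ^ 2 * A + 2 * a * B + C := by
  rcases hA.eq_or_lt with rfl | hA
  · nlinarith
  · nlinarith [sq_nonneg (a * A + B)]

lemma IsBivariateGaussian.map_mul_add_mul {Y₁ Y₂ : Ω → ℝ} {μA μB vA vAB vB : ℝ}
    (h : IsBivariateGaussian (P.map fun ω => (Y₁ ω, Y₂ ω)) μA μB vA vAB vB)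
    (h₁ : Measurable Y₁) (h₂ : Measurable Y₂) (a b : ℝ) :
    P.map (fun ω => a * Y₁ ω + b * Y₂ ω) =
      gaussianReal (a * μA + b * μB) (a ^ 2 * vA + 2 * a * b * vAB + b ^ 2 * vB).toNNReal := by
  rw [← h a b, Measure.map_map (by fun_prop) (by fun_prop)]
  rfl

lemma map_mul_add_add_eq_gaussianReal {X Y U V : Ω → ℝ} {vX c vY wU wUV wV : ℝ}
    (hX : Measurable X) (hY : Measurable Y) (hU : Measurable U) (hV : Measurable V)
    (hXY : IsBivariateGaussian (P.map fun ω => (X ω, Y ω)) 0 0 vX c vY)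
    (hUV : IsBivariateGaussian (P.map fun ω => (U ω, V ω)) 0 0 wU wUV wV)
    (hindep : IndepFun (fun ω => (X ω, Y ω)) (fun ω => (U ω, V ω)) P)
    (hvX : 0 ≤ vX) (hvY : 0 ≤ vY) (hc : c ^ 2 ≤ vX * vY) (hwV : 0 ≤ wV) (a : ℝ) :
    P.map (fun ω => a * X ω + (Y ω + V ω)) =
      gaussianReal 0 (a ^ 2 * vX + 2 * a * c + (vY + wV)).toNNReal := by
  have hind : IndepFun (fun ω => a * X ω + 1 * Y ω) (fun ω => 0 * U ω + 1 * V ω) P := by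
    exact hindep.comp (φ := fun p => a * p.1 + 1 * p.2) (ψ := fun p => 0 * p.1 + 1 * p.2)
      (by fun_prop) (by fun_prop)
  have hsum := gaussianReal_add_gaussianReal_of_indepFun hind
    (hXY.map_mul_add_mul hX hY a 1) (hUV.map_mul_add_mul hU hV 0 1)
  rw [← toNNReal_add (by simpa using quadratic_nonneg_of_sq_le hvX hvY hc a)
    (by simpa using hwV)] at hsum
  convert hsum using 2
  · ext ω
    simp only [Pi.add_apply]
    ring
  · ring
  · congr 1
    ring

end

theorem proxy_model_true_reward_general
    {Ωs : Type*} [MeasurableSpace Ωs] (P : Measure Ωs)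
    (M : ℝ) (hM : 0 < M)
    (Λ11 Λ12 Λ22 Ω11 Ω12 Ω22 : ℝ)
    (hΛ : 0 ≤ Λ11 ∧ 0 ≤ Λ22 ∧ Λ12 ^ 2 ≤ Λ11 * Λ22)
    (hΩ : 0 ≤ Ω11 ∧ 0 ≤ Ω22 ∧ Ω12 ^ 2 ≤ Ω11 * Ω22)
    (hpos : 0 < Λ22 + 2 / M * Ω22)
    (τY τS εY εS : Ωs → ℝ)
    (hτY : Measurable τY) (hτS : Measurable τS) (hεY : Measurable εY) (hεS : Measurable εS)
    (hτlaw : IsBivariateGaussian (P.map (fun ω => (τY ω, τS ω))) 0 0 Λ11 Λ12 Λ22)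
    (hεlaw : IsBivariateGaussian (P.map (fun ω => (εY ω, εS ω))) 0 0
      (2 / M * Ω11) (2 / M * Ω12) (2 / M * Ω22))
    (hindep : IndepFun (fun ω => (τY ω, τS ω)) (fun ω => (εY ω, εS ω)) P) :
    (∫ ω in {ω | 0 < τS ω + εS ω}, τY ω ∂P) / (P {ω | 0 < τS ω + εS ω}).toReal =
      Real.sqrt (2 / π) * Λ12 / Real.sqrt (Λ22 + 2 * Ω22 / M) := by
  have hlaw := map_mul_add_add_eq_gaussianReal hτY hτS hεY hεS hτlaw hεlaw hindep
    hΛ.1 hΛ.2.1 hΛ.2.2 (by have := hΩ.2.1; positivity)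
  rw [setIntegral_pos_div_measure_pos_of_map_mul_add_eq_gaussianReal hpos hlaw, div_mul_eq_mul_div]

/-- In the proxy-metric model — `(τ_Y, τ_S)` a centered bivariate Gaussian
vector with covariance `Λ`, independently `(ε_Y, ε_S)` a centered bivariate Gaussian
vector with covariance `(2/M)Ω`, and estimated effects `τ̂_Y = τ_Y + ε_Y`,
`τ̂_S = τ_S + ε_S` — the true expected reward of the decision rule that launches when
the observed proxy effect is positive satisfies
`E[τ_Y | τ̂_S > 0] = √(2/π) · Λ₁₂ / √(Λ₂₂ + 2Ω₂₂/M)`,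
where `E[A | E] := E[A·1_E]/P(E)`. -/
theorem proxy_model_true_reward
    {Ωs : Type*} [MeasurableSpace Ωs] (P : Measure Ωs) [IsProbabilityMeasure P]
    (M : ℝ) (hM : 0 < M)
    (Λ11 Λ12 Λ22 Ω11 Ω12 Ω22 : ℝ)
    (hΛ : 0 ≤ Λ11 ∧ 0 ≤ Λ22 ∧ Λ12 ^ 2 ≤ Λ11 * Λ22)
    (hΩ : 0 ≤ Ω11 ∧ 0 ≤ Ω22 ∧ Ω12 ^ 2 ≤ Ω11 * Ω22)
    (hpos : 0 < Λ22 + 2 / M * Ω22)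
    (τY τS εY εS : Ωs → ℝ)
    (hτY : Measurable τY) (hτS : Measurable τS) (hεY : Measurable εY) (hεS : Measurable εS)
    (hτlaw : IsBivariateGaussian (P.map (fun ω => (τY ω, τS ω))) 0 0 Λ11 Λ12 Λ22)
    (hεlaw : IsBivariateGaussian (P.map (fun ω => (εY ω, εS ω))) 0 0
      (2 / M * Ω11) (2 / M * Ω12) (2 / M * Ω22))
    (hindep : IndepFun (fun ω => (τY ω, τS ω)) (fun ω => (εY ω, εS ω)) P) :
    (∫ ω in {ω | 0 < τS ω + εS ω}, τY ω ∂P) / (P {ω | 0 < τS ω + εS ω}).toReal =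
      Real.sqrt (2 / π) * Λ12 / Real.sqrt (Λ22 + 2 * Ω22 / M) :=
  proxy_model_true_reward_general P M hM Λ11 Λ12 Λ22 Ω11 Ω12 Ω22 hΛ hΩ hpos τY τS εY εS hτY hτS hεY
    hεS hτlaw hεlaw hindep
end

section
/- In the cross-validated proxy-metric model with Λ₁₂ ≠ 0, the cross-validated expected reward has the same sign as the true expected reward and is no larger in absolute value: writing r_CV = √(2/π)·Λ₁₂/√(Λ₂₂ + 2Ω₂₂/M_p) and r_true = √(2/π)·Λ₁₂/√(Λ₂₂ + 2Ω₂₂/M) with 0 < M_p ≤ M, the ratio satisfies 0 < r_CV / r_true ≤ 1; hence the relative bias (r_CV − r_true)/r_true of the cross-validation estimator lies in (−1, 0]. -/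
open Real

/-- In the cross-validated proxy-metric model with `Λ₁₂ ≠ 0`, writing
`r_CV = √(2/π)·Λ₁₂/√(Λ₂₂ + 2Ω₂₂/M_p)` and `r_true = √(2/π)·Λ₁₂/√(Λ₂₂ + 2Ω₂₂/M)`
with `0 < M_p ≤ M`, the ratio satisfies `0 < r_CV / r_true ≤ 1`; hence the relative
bias `(r_CV − r_true)/r_true` lies in `(−1, 0]`. -/
theorem cv_reward_relative_bias_in_Ioc
    (M Mp Λ12 Λ22 Ω22 : ℝ)
    (hMp : 0 < Mp) (hM : Mp ≤ M)
    (hΛ12 : Λ12 ≠ 0) (hΛ22 : 0 ≤ Λ22) (hΩ22 : 0 ≤ Ω22)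
    (hpos : 0 < Λ22 + (2 / Mp) * Ω22)
    (rCV rtrue : ℝ)
    (hrCV : rCV = Real.sqrt (2 / π) * Λ12 / Real.sqrt (Λ22 + 2 * Ω22 / Mp))
    (hrtrue : rtrue = Real.sqrt (2 / π) * Λ12 / Real.sqrt (Λ22 + 2 * Ω22 / M)) :
    (0 < rCV / rtrue ∧ rCV / rtrue ≤ 1) ∧ (rCV - rtrue) / rtrue ∈ Set.Ioc (-1 : ℝ) 0 := by
  have hMpos : 0 < M := lt_of_lt_of_le hMp hM
  have ha : 0 < Λ22 + 2 * Ω22 / Mp := by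
    have : Λ22 + (2 / Mp) * Ω22 = Λ22 + 2 * Ω22 / Mp := by ring
    linarith [this ▸ hpos]
  have hba : Λ22 + 2 * Ω22 / M ≤ Λ22 + 2 * Ω22 / Mp := by
    have h2 : 0 ≤ 2 * Ω22 := by linarith
    have := div_le_div_of_nonneg_left h2 hMp hM
    linarith
  have hb : 0 < Λ22 + 2 * Ω22 / M := by
    rcases eq_or_lt_of_le hΩ22 with h | h
    · have : Λ22 + 2 * Ω22 / Mp = Λ22 := by rw [← h]; ring
      have hΛ : 0 < Λ22 := by rw [← this]; exact ha
      have : 0 ≤ 2 * Ω22 / M := by positivity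
      linarith
    · have : 0 < 2 * Ω22 / M := by positivity
      linarith
  have hsa : 0 < Real.sqrt (Λ22 + 2 * Ω22 / Mp) := Real.sqrt_pos.mpr ha
  have hsb : 0 < Real.sqrt (Λ22 + 2 * Ω22 / M) := Real.sqrt_pos.mpr hb
  have hc : 0 < Real.sqrt (2 / π) := Real.sqrt_pos.mpr (by positivity)
  have key : rCV / rtrue = Real.sqrt (Λ22 + 2 * Ω22 / M) / Real.sqrt (Λ22 + 2 * Ω22 / Mp) := by
    rw [hrCV, hrtrue, div_div_div_comm, div_self (mul_ne_zero (ne_of_gt hc) hΛ12),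
      one_div, inv_div]
  have hratio_pos : 0 < rCV / rtrue := by rw [key]; positivity
  have hratio_le : rCV / rtrue ≤ 1 := by
    rw [key, div_le_one hsa]
    exact Real.sqrt_le_sqrt hba
  have hrtrue_ne : rtrue ≠ 0 := by
    rw [hrtrue]
    exact div_ne_zero (mul_ne_zero (ne_of_gt hc) hΛ12) (ne_of_gt hsb)
  have hsub : (rCV - rtrue) / rtrue = rCV / rtrue - 1 := by
    rw [sub_div, div_self hrtrue_ne]
  refine ⟨⟨hratio_pos, hratio_le⟩, ?_, ?_⟩ <;> rw [hsub] <;> linarith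
end
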